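/- Let u be a C^1 function on an open set containing the closed parallelogram A spanned by ξ = [0,l]×{0} and z = (z1,z2) with z2 > 0. Then |∫_0^l u(x,0) dx| ≤ (1/z2) ∫_A |u| dx dy + (|z|/z2) ∫_A |∇u| dx dy. -/

import Mathlib

/-!
Write `A` as the image of `[0,l] × [0,1]` under `(x, s) ↦ (x, 0) + s z`, a linear map of
Jacobian `z2`. For each `s`, the fundamental theorem of calculus along the segments
`[(x, 0), (x, 0) + z]` bounds `|∫_ξ u - ∫_{ξ + s z} u|` by `|z| ∫∫ |∇u|` over the rectangle,
and `|∫_{ξ + s z} u| ≤ ∫_{ξ + s z} |u|`; averaging over `s ∈ [0,1]` turns the latter into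
`∫∫ |u|`. Changing variables back to `A` divides both rectangle integrals by `z2`.
-/

open Set MeasureTheory Real

noncomputable section

/-- A point of the Euclidean plane given by its two coordinates. -/
def pt (x y : ℝ) : EuclideanSpace ℝ (Fin 2) := (WithLp.equiv 2 (Fin 2 → ℝ)).symm ![x, y]

@[simp] lemma pt_apply_zero (x y : ℝ) : pt x y 0 = x := rfl
@[simp] lemma pt_apply_one (x y : ℝ) : pt x y 1 = y := rfl

lemma pt_add_smul (x y a b t : ℝ) : pt x y + t • pt a b = pt (x + t * a) (y + t * b) := by
  ext i; fin_cases i <;> simp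

lemma norm_pt (x y : ℝ) : ‖pt x y‖ = √(x ^ 2 + y ^ 2) := by
  simp [EuclideanSpace.norm_eq, Fin.sum_univ_two, sq]

lemma continuous_pt_zero : Continuous (pt · 0) := by
  unfold pt
  exact (PiLp.continuous_toLp 2 _).comp (by fun_prop)

lemma toEuclideanLin_apply_pt (a b c d x y : ℝ) :
    Matrix.toEuclideanLin !![a, b; c, d] (pt x y) = pt (a * x + b * y) (c * x + d * y) := by
  ext i; fin_cases i <;> simp [Matrix.toLpLin_apply, pt, mul_comm]

def ptEquiv : ℝ × ℝ ≃ᵐ EuclideanSpace ℝ (Fin 2) :=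
  ((MeasurableEquiv.toLp 2 (Fin 2 → ℝ)).symm.trans MeasurableEquiv.finTwoArrow).symm

lemma ptEquiv_apply (q : ℝ × ℝ) : ptEquiv q = pt q.1 q.2 := by
  ext i; fin_cases i <;> rfl

lemma measurePreserving_ptEquiv : MeasurePreserving ptEquiv :=
  ((volume_preserving_finTwoArrow ℝ).comp
    (EuclideanSpace.volume_preserving_symm_measurableEquiv_toLp (Fin 2))).symm _

def parallelogramMap (z1 z2 : ℝ) (q : ℝ × ℝ) : EuclideanSpace ℝ (Fin 2) :=
  pt (q.1 + q.2 * z1) (q.2 * z2)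

lemma parallelogramMap_eq_add_smul (z1 z2 : ℝ) :
    parallelogramMap z1 z2 = fun q => pt q.1 0 + q.2 • pt z1 z2 := by
  ext1 q
  rw [parallelogramMap, pt_add_smul, zero_add, mul_comm q.2, mul_comm q.2]

theorem setIntegral_image_parallelogramMap {F : Type*} [NormedAddCommGroup F] [NormedSpace ℝ F]
    (z1 : ℝ) {z2 : ℝ} (hz2 : z2 ≠ 0) {S : Set (ℝ × ℝ)} (hS : MeasurableSet S)
    (g : EuclideanSpace ℝ (Fin 2) → F) :
    ∫ p in parallelogramMap z1 z2 '' S, g p = |z2| • ∫ q in S, g (parallelogramMap z1 z2 q) := by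
  set L := LinearMap.toContinuousLinearMap (Matrix.toEuclideanLin !![1, z1; 0, z2])
  have hL (q : ℝ × ℝ) : L (ptEquiv q) = parallelogramMap z1 z2 q := by
    simp only [L, LinearMap.coe_toContinuousLinearMap', ptEquiv_apply, toEuclideanLin_apply_pt,
      parallelogramMap]
    ring_nf
  have hdet : L.det = z2 := by simp [L, ContinuousLinearMap.det]
  have hinj : Function.Injective L := fun _ _ h =>
    (L.toContinuousLinearEquivOfDetNeZero (hdet ▸ hz2)).injective h
  have himage : parallelogramMap z1 z2 '' S = L '' (ptEquiv '' S) := by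
    rw [image_image]; simp_rw [hL]
  rw [himage,
    integral_image_eq_integral_abs_det_fderiv_smul volume (ptEquiv.measurableSet_image.2 hS)
      (fun p _ => L.hasFDerivAt.hasFDerivWithinAt) hinj.injOn,
    measurePreserving_ptEquiv.setIntegral_image_emb ptEquiv.measurableEmbedding, integral_smul]
  simp_rw [hL, hdet]

theorem ContinuousOn.integrable_prod_restrict {F : Type*} [NormedAddCommGroup F]
    {φ : ℝ × ℝ → F} {S T : Set ℝ} (hS : IsCompact S) (hT : IsCompact T)
    (hφ : ContinuousOn φ (S ×ˢ T)) :
    Integrable φ ((volume.restrict S).prod (volume.restrict T)) := by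
  rw [Measure.prod_restrict]
  exact hφ.integrableOn_compact (hS.prod hT)

section SegmentEstimates

variable {E F : Type*} [NormedAddCommGroup E] [NormedSpace ℝ E]
  [NormedAddCommGroup F] [NormedSpace ℝ F] [CompleteSpace F]
  {f : E → F} {U : Set E}

theorem norm_sub_le_mul_integral_norm_fderiv (hU : IsOpen U) (hf : ContDiffOn ℝ 1 f U)
    {p v : E} (hpv : ∀ t ∈ Icc (0:ℝ) 1, p + t • v ∈ U) {s : ℝ} (hs : s ∈ Icc (0:ℝ) 1) :
    ‖f (p + s • v) - f p‖ ≤ ‖v‖ * ∫ t in (0:ℝ)..1, ‖fderiv ℝ f (p + t • v)‖ := by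
  rw [← uIcc_of_le zero_le_one] at hpv
  have hsub : uIcc 0 s ⊆ uIcc (0:ℝ) 1 :=
    uIcc_subset_uIcc left_mem_uIcc (by rwa [uIcc_of_le zero_le_one])
  have hderiv : ∀ t ∈ uIcc (0:ℝ) 1,
      HasDerivAt (fun t => f (p + t • v)) (fderiv ℝ f (p + t • v) v) t := fun t ht =>
    ((hf.differentiableOn one_ne_zero).differentiableAt (hU.mem_nhds (hpv t ht))).hasFDerivAt
      |>.comp_hasDerivAt t (by simpa using ((hasDerivAt_id t).smul_const v).const_add p)
  have hcont : ContinuousOn (fun t : ℝ => fderiv ℝ f (p + t • v)) (uIcc 0 1) :=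
    (hf.continuousOn_fderiv_of_isOpen hU le_rfl).comp (by fun_prop) hpv
  have hbound : IntervalIntegrable (fun t => ‖fderiv ℝ f (p + t • v)‖ * ‖v‖) volume 0 1 :=
    (hcont.norm.mul continuousOn_const).intervalIntegrable
  calc ‖f (p + s • v) - f p‖ = ‖∫ t in (0:ℝ)..s, fderiv ℝ f (p + t • v) v‖ := by
        rw [intervalIntegral.integral_eq_sub_of_hasDerivAt (fun t ht => hderiv t (hsub ht))
          ((hcont.clm_apply continuousOn_const).mono hsub).intervalIntegrable, zero_smul, add_zero]
    _ ≤ ∫ t in (0:ℝ)..s, ‖fderiv ℝ f (p + t • v)‖ * ‖v‖ :=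
        intervalIntegral.norm_integral_le_of_norm_le hs.1
          (ae_of_all _ fun t _ => (fderiv ℝ f (p + t • v)).le_opNorm v) (hbound.mono_set hsub)
    _ ≤ ∫ t in (0:ℝ)..1, ‖fderiv ℝ f (p + t • v)‖ * ‖v‖ :=
        intervalIntegral.integral_mono_interval le_rfl hs.1 hs.2
          (ae_of_all _ fun _ => by positivity) hbound
    _ = ‖v‖ * ∫ t in (0:ℝ)..1, ‖fderiv ℝ f (p + t • v)‖ := by
        rw [intervalIntegral.integral_mul_const, mul_comm]

variable {b : ℝ → E} {v : E} {K : Set ℝ}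

theorem norm_setIntegral_translate_sub_le (hU : IsOpen U) (hf : ContDiffOn ℝ 1 f U)
    (hb : Continuous b) (hK : IsCompact K)
    (hbU : MapsTo (fun q : ℝ × ℝ => b q.1 + q.2 • v) (K ×ˢ Icc 0 1) U)
    {s : ℝ} (hs : s ∈ Icc (0:ℝ) 1) :
    ‖(∫ x in K, f (b x + s • v)) - ∫ x in K, f (b x)‖
      ≤ ‖v‖ * ∫ q in K ×ˢ Icc (0:ℝ) 1, ‖fderiv ℝ f (b q.1 + q.2 • v)‖ := by
  have hslice : ∀ t ∈ Icc (0:ℝ) 1, IntegrableOn (fun x => f (b x + t • v)) K := fun t ht =>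
    (hf.continuousOn.comp (hb.add continuous_const).continuousOn
      fun x hx => hbU (mk_mem_prod hx ht : (x, t) ∈ _)).integrableOn_compact hK
  have hslice0 : IntegrableOn (fun x => f (b x)) K := by
    simpa using hslice 0 ⟨le_rfl, zero_le_one⟩
  have hD : ContinuousOn (fun q : ℝ × ℝ => ‖fderiv ℝ f (b q.1 + q.2 • v)‖) (K ×ˢ Icc (0:ℝ) 1) :=
    ((hf.continuousOn_fderiv_of_isOpen hU le_rfl).comp (by fun_prop) hbU).norm
  rw [← integral_sub (hslice s hs) hslice0, Measure.volume_eq_prod,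
    setIntegral_prod _ (hD.integrableOn_compact (hK.prod isCompact_Icc)), ← integral_const_mul]
  refine norm_integral_le_of_norm_le
    ((hD.integrable_prod_restrict hK isCompact_Icc).integral_prod_left.const_mul _)
    (ae_restrict_of_forall_mem hK.measurableSet fun x hx => ?_)
  have h := norm_sub_le_mul_integral_norm_fderiv hU hf (p := b x) (v := v)
    (fun t ht => hbU (mk_mem_prod hx ht : (x, t) ∈ _)) hs
  rwa [intervalIntegral.integral_of_le zero_le_one, ← integral_Icc_eq_integral_Ioc] at h

theorem norm_setIntegral_le_integral_norm_add_integral_norm_fderiv (hU : IsOpen U)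
    (hf : ContDiffOn ℝ 1 f U) (hb : Continuous b) (hK : IsCompact K)
    (hbU : MapsTo (fun q : ℝ × ℝ => b q.1 + q.2 • v) (K ×ˢ Icc 0 1) U) :
    ‖∫ x in K, f (b x)‖
      ≤ (∫ q in K ×ˢ Icc (0:ℝ) 1, ‖f (b q.1 + q.2 • v)‖)
        + ‖v‖ * ∫ q in K ×ˢ Icc (0:ℝ) 1, ‖fderiv ℝ f (b q.1 + q.2 • v)‖ := by
  set D := ∫ q in K ×ˢ Icc (0:ℝ) 1, ‖fderiv ℝ f (b q.1 + q.2 • v)‖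
  have hcont : ContinuousOn (fun q : ℝ × ℝ => ‖f (b q.1 + q.2 • v)‖) (K ×ˢ Icc (0:ℝ) 1) :=
    (hf.continuousOn.comp (by fun_prop) hbU).norm
  have hint := hcont.integrable_prod_restrict hK isCompact_Icc
  have hslice : ∀ s ∈ Icc (0:ℝ) 1,
      ‖∫ x in K, f (b x)‖ ≤ (∫ x in K, ‖f (b x + s • v)‖) + ‖v‖ * D := fun s hs =>
    calc ‖∫ x in K, f (b x)‖
        ≤ ‖∫ x in K, f (b x + s • v)‖ + ‖(∫ x in K, f (b x + s • v)) - ∫ x in K, f (b x)‖ :=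
          norm_le_norm_add_norm_sub _ _
      _ ≤ (∫ x in K, ‖f (b x + s • v)‖) + ‖v‖ * D :=
          add_le_add (norm_integral_le_integral_norm _)
            (norm_setIntegral_translate_sub_le hU hf hb hK hbU hs)
  have hconst : IntegrableOn (fun _ : ℝ => ‖v‖ * D) (Icc 0 1) :=
    integrableOn_const measure_Icc_lt_top.ne
  have h := setIntegral_ge_of_const_le_real measurableSet_Icc measure_Icc_lt_top.ne hslice
    (hint.integral_prod_right.add hconst)
  rw [Real.volume_real_Icc_of_le zero_le_one, sub_zero, mul_one,
    integral_add hint.integral_prod_right hconst, setIntegral_const,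
    Real.volume_real_Icc_of_le zero_le_one, sub_zero, one_smul, ← integral_integral_swap hint] at h
  rwa [Measure.volume_eq_prod,
    setIntegral_prod _ (hcont.integrableOn_compact (hK.prod isCompact_Icc))]

end SegmentEstimates

/-- For `u` of class `C¹` on an open set containing the closed parallelogram `A` spanned by
`ξ = [0,l] × {0}` and `z = (z1,z2)` with `z2 > 0`:
`|∫_0^l u(x,0) dx| ≤ (1/z2) ∫_A |u| + (|z|/z2) ∫_A |∇u|`. -/
theorem segment_integral_estimate (l z1 z2 : ℝ) (hl : 0 < l) (hz2 : 0 < z2)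
    (A : Set (EuclideanSpace ℝ (Fin 2)))
    (hA : A = {p | ∃ x ∈ Icc (0:ℝ) l, ∃ s ∈ Icc (0:ℝ) 1, p = pt (x + s * z1) (s * z2)})
    (U : Set (EuclideanSpace ℝ (Fin 2))) (hU : IsOpen U) (hAU : A ⊆ U)
    (u : EuclideanSpace ℝ (Fin 2) → ℝ) (hu : ContDiffOn ℝ 1 u U) :
    |∫ x in (0:ℝ)..l, u (pt x 0)|
      ≤ (1 / z2) * (∫ p in A, |u p|)
        + (Real.sqrt (z1 ^ 2 + z2 ^ 2) / z2) * ∫ p in A, ‖fderiv ℝ u p‖ := by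
  have hA_image : A = parallelogramMap z1 z2 '' (Icc 0 l ×ˢ Icc 0 1) := by
    rw [hA]; ext p; constructor
    · rintro ⟨x, hx, s, hs, rfl⟩; exact ⟨(x, s), ⟨hx, hs⟩, rfl⟩
    · rintro ⟨⟨x, s⟩, ⟨hx, hs⟩, rfl⟩; exact ⟨x, hx, s, hs, rfl⟩
  have hQ : MeasurableSet (Icc (0:ℝ) l ×ˢ Icc (0:ℝ) 1) := measurableSet_Icc.prod measurableSet_Icc
  have hQU : MapsTo (parallelogramMap z1 z2) (Icc 0 l ×ˢ Icc 0 1) U :=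
    (mapsTo_image _ _).mono_right (hA_image ▸ hAU)
  rw [parallelogramMap_eq_add_smul] at hQU
  have key := norm_setIntegral_le_integral_norm_add_integral_norm_fderiv hU hu continuous_pt_zero
    isCompact_Icc hQU
  rw [hA_image, setIntegral_image_parallelogramMap z1 hz2.ne' hQ,
    setIntegral_image_parallelogramMap z1 hz2.ne' hQ, abs_of_pos hz2,
    intervalIntegral.integral_of_le hl.le, ← integral_Icc_eq_integral_Ioc, ← norm_pt]
  simp_rw [parallelogramMap_eq_add_smul, smul_eq_mul, ← Real.norm_eq_abs]
  field_simp
  exact key
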